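/- Let E be a Banach space, T>0, and let μ be an E-valued function on the simplex {(s,t) : 0≤s≤t≤T} which is almost-additive, i.e. there exist constants c>0 and γ>1 such that |(μ_tu + μ_us) − μ_ts| ≤ c|t−s|^γ for all 0≤s≤u≤t≤T. Then there exists a function φ : [0,T] → E and a constant c'>0 (which can be chosen to depend only on c, γ and T) such that |(φ_t − φ_s) − μ_ts| ≤ c'|t−s|^γ for all 0≤s≤t≤T; moreover φ is unique up to an additive constant: if ψ : [0,T] → E satisfies |(ψ_t − ψ_s) − μ_ts| ≤ c''|t−s|^γ for some c''>0 and all 0≤s≤t≤T, then ψ_t − ψ_s = φ_t − φ_s for all 0≤s≤t≤T. -/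

import Mathlib

/-
Riemann sums of `μ` along the dyadic grid of `[0, T]` with mesh `T / 2 ^ n`, clamped to `[s, t]`,
form a Cauchy sequence: halving the mesh changes each interval by one defect of almost-additivity,
in total at most `c (T / 2 ^ n) ^ (γ - 1) (t - s)`. The sewing `φ t` is the limit of these sums
over `[0, t]`. The sums over `[0, s]` and `[s, t]` add up to the sum over `[0, t]` up to the one
interval straddling `s`, so `φ t - φ s` is also the limit of the sums over `[s, t]`, and those stay
uniformly close to `μ s t` by Young's argument: some interior point of a partition of `[s, t]` into
`N + 1` intervals has its neighbours within `2 (t - s) / N` of each other, and removing it costs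
`c (2 (t - s) / N) ^ γ`, which is summable in `N`. For uniqueness, the difference of two such
functions has increments of order `(t - s) ^ γ` with `γ > 1`, so it is constant.
-/

open Filter Finset Topology

lemma Real.rpow_le_rpow_sub_one_mul {x h γ : ℝ} (hγ : 1 ≤ γ) (hx : 0 ≤ x) (hxh : x ≤ h) :
    x ^ γ ≤ h ^ (γ - 1) * x := by
  calc x ^ γ = x ^ (γ - 1) * x := by
        rw [← Real.rpow_add_one' hx (by linarith), sub_add_cancel]
    _ ≤ h ^ (γ - 1) * x := by gcongr

lemma div_two_pow_rpow {T : ℝ} (hT : 0 ≤ T) (γ : ℝ) (n : ℕ) :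
    (T / 2 ^ n) ^ γ = T ^ γ * ((2 ^ γ)⁻¹) ^ n := by
  rw [Real.div_rpow hT (by positivity), ← Real.rpow_pow_comm zero_le_two, div_eq_mul_inv, inv_pow]

noncomputable def sewingConstant (γ : ℝ) : ℝ := 2 ^ γ * ∑' k : ℕ, (((k : ℝ) + 1) ^ γ)⁻¹

lemma summable_inv_add_one_rpow {γ : ℝ} (hγ : 1 < γ) :
    Summable fun k : ℕ => (((k : ℝ) + 1) ^ γ)⁻¹ := by
  simpa using (summable_nat_add_iff 1).mpr (Real.summable_nat_rpow_inv.mpr hγ)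

lemma sewingConstant_pos {γ : ℝ} (hγ : 1 < γ) : 0 < sewingConstant γ :=
  mul_pos (by positivity)
    ((summable_inv_add_one_rpow hγ).tsum_pos (fun _ => by positivity) 0 (by simp))

def partitionSum {α E : Type*} [AddCommMonoid E] (μ : α → α → E) (a : ℕ → α) (N : ℕ) : E :=
  ∑ i ∈ range N, μ (a i) (a (i + 1))

section Partition

variable {α E : Type*} [AddCommGroup E] (μ : α → α → E) (a : ℕ → α)

lemma partitionSum_erase {i N : ℕ} (hi : i ≤ N) :
    partitionSum μ a (N + 2) =
      partitionSum μ (fun j => a (if j ≤ i then j else j + 1)) (N + 1) +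
        (μ (a (i + 1)) (a (i + 2)) + μ (a i) (a (i + 1)) - μ (a i) (a (i + 2))) := by
  obtain ⟨m, rfl⟩ := Nat.exists_eq_add_of_le hi
  induction m with
  | zero =>
    have hleft : ∀ j ∈ range i, μ (a (if j ≤ i then j else j + 1))
        (a (if j + 1 ≤ i then j + 1 else j + 1 + 1)) = μ (a j) (a (j + 1)) := by
      intro j hj
      rw [mem_range] at hj
      rw [if_pos (by omega), if_pos (by omega)]
    simp only [partitionSum, add_zero, sum_range_succ, sum_congr rfl hleft, le_refl, if_true,
      show ¬ i + 1 ≤ i by omega, if_false]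
    abel
  | succ m ih =>
    rw [partitionSum, show i + (m + 1) + 2 = i + m + 2 + 1 by omega, sum_range_succ,
      ← partitionSum, ih (by omega), partitionSum, partitionSum,
      show i + (m + 1) + 1 = i + m + 1 + 1 by omega, sum_range_succ (n := i + m + 1),
      if_neg (by omega), if_neg (by omega)]
    abel

lemma partitionSum_two_mul (N : ℕ) :
    partitionSum μ a (2 * N) =
      ∑ i ∈ range N, (μ (a (2 * i)) (a (2 * i + 1)) + μ (a (2 * i + 1)) (a (2 * i + 2))) := by
  induction N with
  | zero => simp [partitionSum]
  | succ N ih =>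
    rw [show 2 * (N + 1) = 2 * N + 1 + 1 by ring, partitionSum, sum_range_succ, sum_range_succ,
      ← partitionSum, ih, sum_range_succ]
    abel

end Partition

lemma Monotone.exists_add_two_sub_le {a : ℕ → ℝ} (ha : Monotone a) (N : ℕ) :
    ∃ i ≤ N, a (i + 2) - a i ≤ 2 * (a (N + 2) - a 0) / (N + 1) := by
  have hsum : ∑ i ∈ range (N + 1), (a (i + 2) - a i) ≤
      ∑ _i ∈ range (N + 1), 2 * (a (N + 2) - a 0) / (N + 1) := by
    have htel : ∑ i ∈ range (N + 1), (a (i + 2) - a i) = a (N + 2) - a 1 + (a (N + 1) - a 0) := by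
      rw [← sum_range_sub (fun i => a (i + 1)), ← sum_range_sub a, ← sum_add_distrib]
      exact sum_congr rfl fun i _ => by ring
    rw [htel, sum_const, card_range, nsmul_eq_mul, Nat.cast_add_one,
      mul_div_cancel₀ _ (by positivity)]
    linarith [ha (Nat.zero_le 1), ha (Nat.le_succ (N + 1))]
  obtain ⟨i, hi, hle⟩ := exists_le_of_sum_le nonempty_range_add_one hsum
  exact ⟨i, Nat.lt_succ_iff.mp (mem_range.mp hi), hle⟩

def AlmostAdditive {E : Type*} [NormedAddCommGroup E] (μ : ℝ → ℝ → E) (T c γ : ℝ) : Prop :=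
  ∀ s u t : ℝ, 0 ≤ s → s ≤ u → u ≤ t → t ≤ T → ‖(μ u t + μ s u) - μ s t‖ ≤ c * (t - s) ^ γ

namespace AlmostAdditive

variable {E : Type*} [NormedAddCommGroup E] {μ : ℝ → ℝ → E} {T c γ : ℝ}

lemma apply_self (hμ : AlmostAdditive μ T c γ) (hγ : 0 < γ) {x : ℝ} (hx : 0 ≤ x) (hxT : x ≤ T) :
    μ x x = 0 := by
  have h := hμ x x x hx le_rfl le_rfl hxT
  rwa [add_sub_cancel_right, sub_self, Real.zero_rpow hγ.ne', mul_zero, norm_le_zero_iff] at h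

lemma norm_partitionSum_sub_le_sum (hμ : AlmostAdditive μ T c γ) (hc : 0 ≤ c) (hγ : 0 < γ)
    (N : ℕ) {a : ℕ → ℝ} (ha : Monotone a) (ha0 : 0 ≤ a 0) (haT : a (N + 1) ≤ T) :
    ‖partitionSum μ a (N + 1) - μ (a 0) (a (N + 1))‖ ≤
      c * (2 * (a (N + 1) - a 0)) ^ γ * ∑ k ∈ range N, (((k : ℝ) + 1) ^ γ)⁻¹ := by
  induction N generalizing a with
  | zero => simp [partitionSum]
  | succ N ih =>
    obtain ⟨i, hiN, hgap⟩ := ha.exists_add_two_sub_le N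
    set b : ℕ → ℝ := fun j => a (if j ≤ i then j else j + 1)
    have hb : Monotone b := fun j k hjk => ha (by split_ifs <;> omega)
    have hb0 : b 0 = a 0 := by simp [b]
    have hbN : b (N + 1) = a (N + 2) := by simp [b, show ¬ N + 1 ≤ i by omega]
    have hIH := ih hb (hb0 ▸ ha0) (hbN ▸ haT)
    rw [hb0, hbN] at hIH
    have hδ : ‖μ (a (i + 1)) (a (i + 2)) + μ (a i) (a (i + 1)) - μ (a i) (a (i + 2))‖ ≤
        c * (2 * (a (N + 2) - a 0)) ^ γ * (((N : ℝ) + 1) ^ γ)⁻¹ := by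
      have hlen : 0 ≤ 2 * (a (N + 2) - a 0) := by linarith [ha (Nat.zero_le (N + 2))]
      calc _ ≤ c * (a (i + 2) - a i) ^ γ :=
            hμ _ _ _ (ha0.trans (ha (Nat.zero_le _))) (ha (by omega)) (ha (by omega))
              ((ha (by omega)).trans haT)
        _ ≤ c * (2 * (a (N + 2) - a 0) / (N + 1)) ^ γ := by
            gcongr
            exact sub_nonneg.mpr (ha (by omega))
        _ = _ := by rw [Real.div_rpow hlen (by positivity)]; ring
    calc ‖partitionSum μ a (N + 2) - μ (a 0) (a (N + 2))‖
        ≤ ‖partitionSum μ b (N + 1) - μ (a 0) (a (N + 2))‖ +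
          ‖μ (a (i + 1)) (a (i + 2)) + μ (a i) (a (i + 1)) - μ (a i) (a (i + 2))‖ := by
          rw [partitionSum_erase μ a hiN, add_sub_right_comm]
          exact norm_add_le _ _
      _ ≤ _ := add_le_add hIH hδ
      _ = _ := by rw [sum_range_succ]; ring

lemma norm_partitionSum_sub_le (hμ : AlmostAdditive μ T c γ) (hc : 0 ≤ c) (hγ : 1 < γ)
    (N : ℕ) {a : ℕ → ℝ} (ha : Monotone a) (ha0 : 0 ≤ a 0) (haT : a N ≤ T) :
    ‖partitionSum μ a N - μ (a 0) (a N)‖ ≤ c * sewingConstant γ * (a N - a 0) ^ γ := by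
  have hγ0 : 0 < γ := by linarith
  cases N with
  | zero =>
    rw [partitionSum, range_zero, sum_empty, zero_sub, norm_neg, hμ.apply_self hγ0 ha0 haT,
      norm_zero]
    simp [Real.zero_rpow hγ0.ne']
  | succ N =>
    have hlen : 0 ≤ a (N + 1) - a 0 := sub_nonneg.mpr (ha (Nat.zero_le _))
    calc _ ≤ c * (2 * (a (N + 1) - a 0)) ^ γ * ∑ k ∈ range N, (((k : ℝ) + 1) ^ γ)⁻¹ :=
          hμ.norm_partitionSum_sub_le_sum hc hγ0 N ha ha0 haT
      _ ≤ c * (2 * (a (N + 1) - a 0)) ^ γ * ∑' k : ℕ, (((k : ℝ) + 1) ^ γ)⁻¹ := by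
          gcongr
          exact (summable_inv_add_one_rpow hγ).sum_le_tsum _ fun _ _ => by positivity
      _ = _ := by rw [Real.mul_rpow zero_le_two hlen, sewingConstant]; ring

lemma norm_partitionSum_two_mul_sub_le (hμ : AlmostAdditive μ T c γ) (hc : 0 ≤ c) (hγ : 1 ≤ γ)
    (N : ℕ) {a : ℕ → ℝ} (ha : Monotone a) (ha0 : 0 ≤ a 0) (haT : a (2 * N) ≤ T) {h : ℝ}
    (hh : ∀ i < N, a (2 * i + 2) - a (2 * i) ≤ h) :
    ‖partitionSum μ a (2 * N) - partitionSum μ (fun i => a (2 * i)) N‖ ≤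
      c * h ^ (γ - 1) * (a (2 * N) - a 0) := by
  have hΔ : ∀ i, 0 ≤ a (2 * i + 2) - a (2 * i) := fun i => sub_nonneg.mpr (ha (by omega))
  rw [partitionSum_two_mul, partitionSum, ← sum_sub_distrib]
  calc _ ≤ ∑ i ∈ range N, c * (a (2 * i + 2) - a (2 * i)) ^ γ := by
        refine (norm_sum_le _ _).trans (sum_le_sum fun i hi => ?_)
        have hiN : 2 * i + 2 ≤ 2 * N := by have := mem_range.mp hi; omega
        rw [add_comm, show 2 * (i + 1) = 2 * i + 2 by ring]
        exact hμ _ _ _ (ha0.trans (ha (Nat.zero_le _))) (ha (by omega)) (ha (by omega))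
          ((ha hiN).trans haT)
    _ ≤ ∑ i ∈ range N, c * (h ^ (γ - 1) * (a (2 * (i + 1)) - a (2 * i))) := by
        refine sum_le_sum fun i hi => ?_
        rw [show 2 * (i + 1) = 2 * i + 2 by ring]
        exact mul_le_mul_of_nonneg_left
          (Real.rpow_le_rpow_sub_one_mul hγ (hΔ i) (hh i (mem_range.mp hi))) hc
    _ = c * h ^ (γ - 1) * (a (2 * N) - a 0) := by
        rw [← mul_sum, ← mul_sum, sum_range_sub (fun i => a (2 * i))]
        simp only [mul_zero]
        ring

lemma norm_min_add_max_sub_le (hμ : AlmostAdditive μ T c γ) (hγ : 0 < γ) {x y u : ℝ}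
    (hx : 0 ≤ x) (hxy : x ≤ y) (hyT : y ≤ T) (hu0 : 0 ≤ u) (huT : u ≤ T) :
    ‖μ (min u x) (min u y) + μ (max u x) (max u y) - μ x y‖ ≤
      if x < u ∧ u < y then c * (y - x) ^ γ else 0 := by
  have hμu := hμ.apply_self hγ hu0 huT
  split_ifs with hxuy
  · obtain ⟨hxu, huy⟩ := hxuy
    rw [min_eq_right hxu.le, min_eq_left huy.le, max_eq_left hxu.le, max_eq_right huy.le, add_comm]
    exact hμ x u y hx hxu.le huy.le hyT
  · rcases le_or_gt u x with hux | hxu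
    · rw [min_eq_left hux, min_eq_left (hux.trans hxy), max_eq_right hux,
        max_eq_right (hux.trans hxy), hμu]
      simp
    · have hyu : y ≤ u := not_lt.mp fun huy => hxuy ⟨hxu, huy⟩
      rw [min_eq_right (hxy.trans hyu), min_eq_right hyu, max_eq_left (hxy.trans hyu),
        max_eq_left hyu, hμu]
      simp

lemma norm_partitionSum_min_add_max_sub_le (hμ : AlmostAdditive μ T c γ) (hc : 0 ≤ c)
    (hγ : 0 < γ) (N : ℕ) {a : ℕ → ℝ} (ha : Monotone a) (ha0 : 0 ≤ a 0) (haT : a N ≤ T)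
    {u : ℝ} (hu0 : 0 ≤ u) (huT : u ≤ T) {h : ℝ} (hh0 : 0 ≤ h) (hh : ∀ i < N, a (i + 1) - a i ≤ h) :
    ‖partitionSum μ (fun i => min u (a i)) N + partitionSum μ (fun i => max u (a i)) N -
        partitionSum μ a N‖ ≤ c * h ^ γ := by
  set J := (range N).filter fun i => a i < u ∧ u < a (i + 1)
  have hJ : #J ≤ 1 := by
    refine card_le_one.mpr fun i hi j hj => ?_
    simp only [J, mem_filter] at hi hj
    by_contra hij
    rcases Nat.lt_or_gt_of_ne hij with h' | h'
    · linarith [ha (Nat.succ_le_of_lt h')]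
    · linarith [ha (Nat.succ_le_of_lt h')]
  have hterm : ∀ i ∈ range N, ‖μ (min u (a i)) (min u (a (i + 1))) +
      μ (max u (a i)) (max u (a (i + 1))) - μ (a i) (a (i + 1))‖ ≤
        if a i < u ∧ u < a (i + 1) then c * h ^ γ else 0 := by
    intro i hi
    have hiN := mem_range.mp hi
    refine (hμ.norm_min_add_max_sub_le hγ (ha0.trans (ha (Nat.zero_le i))) (ha (Nat.le_succ i))
      ((ha hiN).trans haT) hu0 huT).trans ?_
    split_ifs
    · exact mul_le_mul_of_nonneg_left
        (Real.rpow_le_rpow (sub_nonneg.mpr (ha (Nat.le_succ i))) (hh i hiN) hγ.le) hc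
    · exact le_rfl
  simp only [partitionSum]
  rw [← sum_add_distrib, ← sum_sub_distrib]
  calc _ ≤ ∑ i ∈ range N, if a i < u ∧ u < a (i + 1) then c * h ^ γ else 0 :=
        (norm_sum_le _ _).trans (sum_le_sum hterm)
    _ = #J * (c * h ^ γ) := by rw [← sum_filter, sum_const, nsmul_eq_mul]
    _ ≤ 1 * (c * h ^ γ) := by gcongr; exact_mod_cast hJ
    _ = c * h ^ γ := one_mul _

end AlmostAdditive

/-- The grid `i * T / 2 ^ n` clamped to `[s, t]` rather than rescaled to it, so that the grids of
`[s, u]` and `[u, t]` are the truncations of the grid of `[s, t]` at `u`. -/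
noncomputable def dyadicGrid (T s t : ℝ) (n i : ℕ) : ℝ := max s (min t (i * T / 2 ^ n))

section DyadicGrid

variable {T s t : ℝ} {n : ℕ}

lemma dyadicGrid_monotone (hT : 0 ≤ T) : Monotone (dyadicGrid T s t n) := fun i j hij => by
  unfold dyadicGrid
  gcongr

lemma dyadicGrid_zero (hs : 0 ≤ s) : dyadicGrid T s t n 0 = s := by
  simp [dyadicGrid, hs]

lemma dyadicGrid_two_pow (hst : s ≤ t) (htT : t ≤ T) : dyadicGrid T s t n (2 ^ n) = t := by
  simp [dyadicGrid, htT, hst]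

lemma dyadicGrid_succ_two_mul (i : ℕ) :
    dyadicGrid T s t (n + 1) (2 * i) = dyadicGrid T s t n i := by
  simp only [dyadicGrid]
  congr 2
  push_cast
  ring

lemma dyadicGrid_succ_sub_le (hT : 0 ≤ T) (i : ℕ) :
    dyadicGrid T s t n (i + 1) - dyadicGrid T s t n i ≤ T / 2 ^ n := by
  have hx : (i : ℝ) * T / 2 ^ n ≤ ((i + 1 : ℕ) : ℝ) * T / 2 ^ n := by gcongr; simp
  have hstep : ((i + 1 : ℕ) : ℝ) * T / 2 ^ n - i * T / 2 ^ n = T / 2 ^ n := by push_cast; ring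
  simp only [dyadicGrid, max_def, min_def]
  split_ifs <;> linarith

lemma min_dyadicGrid {u : ℝ} (hsu : s ≤ u) (hut : u ≤ t) (i : ℕ) :
    min u (dyadicGrid T s t n i) = dyadicGrid T s u n i := by
  simp only [dyadicGrid]
  rw [min_max_distrib_left, min_eq_right hsu, ← min_assoc, min_eq_left hut]

lemma max_dyadicGrid {u : ℝ} (hsu : s ≤ u) (i : ℕ) :
    max u (dyadicGrid T s t n i) = dyadicGrid T u t n i := by
  simp only [dyadicGrid]
  rw [← max_assoc, max_eq_left hsu]

end DyadicGrid

noncomputable def dyadicSum {E : Type*} [AddCommMonoid E] (μ : ℝ → ℝ → E) (T s t : ℝ) (n : ℕ) :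
    E :=
  partitionSum μ (dyadicGrid T s t n) (2 ^ n)

noncomputable def sewingMap {E : Type*} [AddCommMonoid E] [TopologicalSpace E] (μ : ℝ → ℝ → E)
    (T t : ℝ) : E :=
  limUnder atTop fun n => dyadicSum μ T 0 t n

namespace AlmostAdditive

variable {E : Type*} [NormedAddCommGroup E] {μ : ℝ → ℝ → E} {T c γ s t : ℝ}

lemma norm_dyadicSum_sub_le (hμ : AlmostAdditive μ T c γ) (hc : 0 ≤ c) (hγ : 1 < γ)
    (hs : 0 ≤ s) (hst : s ≤ t) (htT : t ≤ T) (n : ℕ) :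
    ‖dyadicSum μ T s t n - μ s t‖ ≤ c * sewingConstant γ * (t - s) ^ γ := by
  have h := hμ.norm_partitionSum_sub_le hc hγ (2 ^ n) (a := dyadicGrid T s t n)
    (dyadicGrid_monotone (hs.trans (hst.trans htT))) (by rwa [dyadicGrid_zero hs])
    (by rwa [dyadicGrid_two_pow hst htT])
  rwa [dyadicGrid_zero hs, dyadicGrid_two_pow hst htT] at h

lemma norm_dyadicSum_succ_sub_le (hμ : AlmostAdditive μ T c γ) (hc : 0 ≤ c) (hγ : 1 ≤ γ)
    (hs : 0 ≤ s) (hst : s ≤ t) (htT : t ≤ T) (n : ℕ) :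
    ‖dyadicSum μ T s t (n + 1) - dyadicSum μ T s t n‖ ≤ c * (T / 2 ^ n) ^ (γ - 1) * (t - s) := by
  have hT : 0 ≤ T := hs.trans (hst.trans htT)
  have hgrid : (fun i => dyadicGrid T s t (n + 1) (2 * i)) = dyadicGrid T s t n :=
    funext dyadicGrid_succ_two_mul
  have h := hμ.norm_partitionSum_two_mul_sub_le hc hγ (2 ^ n) (a := dyadicGrid T s t (n + 1))
    (dyadicGrid_monotone hT) (by rwa [dyadicGrid_zero hs])
    (by rwa [← pow_succ', dyadicGrid_two_pow hst htT])
    (h := T / 2 ^ n) fun i _ => by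
      rw [show 2 * i + 2 = 2 * (i + 1) by ring, dyadicGrid_succ_two_mul, dyadicGrid_succ_two_mul]
      exact dyadicGrid_succ_sub_le hT i
  rwa [hgrid, ← pow_succ', dyadicGrid_two_pow hst htT, dyadicGrid_zero hs] at h

lemma cauchySeq_dyadicSum (hμ : AlmostAdditive μ T c γ) (hc : 0 ≤ c) (hγ : 1 < γ)
    (hs : 0 ≤ s) (hst : s ≤ t) (htT : t ≤ T) : CauchySeq fun n => dyadicSum μ T s t n := by
  have hT : 0 ≤ T := hs.trans (hst.trans htT)
  refine cauchySeq_of_le_geometric ((2 ^ (γ - 1))⁻¹) (c * T ^ (γ - 1) * (t - s))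
    (inv_lt_one_of_one_lt₀ (Real.one_lt_rpow one_lt_two (by linarith))) fun n => ?_
  rw [dist_comm, dist_eq_norm]
  refine (hμ.norm_dyadicSum_succ_sub_le hc hγ.le hs hst htT n).trans_eq ?_
  rw [div_two_pow_rpow hT]
  ring

lemma norm_dyadicSum_add_sub_le (hμ : AlmostAdditive μ T c γ) (hc : 0 ≤ c) (hγ : 0 < γ)
    {u : ℝ} (hs : 0 ≤ s) (hsu : s ≤ u) (hut : u ≤ t) (htT : t ≤ T) (n : ℕ) :
    ‖dyadicSum μ T s u n + dyadicSum μ T u t n - dyadicSum μ T s t n‖ ≤ c * (T / 2 ^ n) ^ γ := by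
  have hT : 0 ≤ T := hs.trans ((hsu.trans hut).trans htT)
  have h := hμ.norm_partitionSum_min_add_max_sub_le hc hγ (2 ^ n) (a := dyadicGrid T s t n)
    (dyadicGrid_monotone hT) (by rwa [dyadicGrid_zero hs])
    (by rwa [dyadicGrid_two_pow (hsu.trans hut) htT])
    (hs.trans hsu) (hut.trans htT) (by positivity) fun i _ => dyadicGrid_succ_sub_le hT i
  simpa only [dyadicSum, min_dyadicGrid hsu hut, max_dyadicGrid hsu] using h

lemma norm_sewingMap_sub_sub_le [CompleteSpace E] (hμ : AlmostAdditive μ T c γ) (hc : 0 ≤ c)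
    (hγ : 1 < γ) (hs : 0 ≤ s) (hst : s ≤ t) (htT : t ≤ T) :
    ‖sewingMap μ T t - sewingMap μ T s - μ s t‖ ≤ c * sewingConstant γ * (t - s) ^ γ := by
  have hT : 0 ≤ T := hs.trans (hst.trans htT)
  have hlim_t := (hμ.cauchySeq_dyadicSum hc hγ le_rfl (hs.trans hst) htT).tendsto_limUnder
  have hlim_s := (hμ.cauchySeq_dyadicSum hc hγ le_rfl hs (hst.trans htT)).tendsto_limUnder
  have hmesh : Tendsto (fun n : ℕ => c * (T / 2 ^ n) ^ γ) atTop (𝓝 0) := by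
    simp_rw [div_two_pow_rpow hT, ← mul_assoc]
    simpa using ((tendsto_pow_atTop_nhds_zero_of_lt_one (by positivity)
      (inv_lt_one_of_one_lt₀ (Real.one_lt_rpow (z := γ) one_lt_two (by linarith)))).const_mul
      (c * T ^ γ))
  refine le_of_tendsto_of_tendsto' ((hlim_t.sub hlim_s).sub_const (μ s t)).norm
    (by simpa using hmesh.add_const (c * sewingConstant γ * (t - s) ^ γ)) fun n => ?_
  calc ‖dyadicSum μ T 0 t n - dyadicSum μ T 0 s n - μ s t‖
      = ‖(dyadicSum μ T s t n - μ s t) -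
          (dyadicSum μ T 0 s n + dyadicSum μ T s t n - dyadicSum μ T 0 t n)‖ := by
        congr 1; abel
    _ ≤ c * sewingConstant γ * (t - s) ^ γ + c * (T / 2 ^ n) ^ γ :=
        (norm_sub_le _ _).trans (add_le_add (hμ.norm_dyadicSum_sub_le hc hγ hs hst htT n)
          (hμ.norm_dyadicSum_add_sub_le hc (by linarith) le_rfl hs hst htT n))
    _ = _ := add_comm _ _

end AlmostAdditive

lemma eq_of_norm_sub_le_mul_rpow {E : Type*} [NormedAddCommGroup E] {g : ℝ → E}
    {K γ s t : ℝ} (hγ : 1 < γ) (hst : s ≤ t)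
    (hg : ∀ x y, s ≤ x → x ≤ y → y ≤ t → ‖g y - g x‖ ≤ K * (y - x) ^ γ) : g s = g t := by
  have hbound : ∀ n : ℕ, 0 < n → dist (g s) (g t) ≤ K * (t - s) ^ γ * (n : ℝ) ^ (1 - γ) := by
    intro n hn
    have hn' : (0 : ℝ) < n := Nat.cast_pos.mpr hn
    set d := (t - s) / n
    have hd : 0 ≤ d := div_nonneg (sub_nonneg.mpr hst) hn'.le
    have hnd : n * d = t - s := mul_div_cancel₀ _ hn'.ne'
    set p : ℕ → ℝ := fun i => s + i * d
    have hp : ∀ i ≤ n, s ≤ p i ∧ p i ≤ t := fun i hi =>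
      ⟨le_add_of_nonneg_right (by positivity),
        by linarith [mul_le_mul_of_nonneg_right (Nat.cast_le.mpr hi : (i : ℝ) ≤ n) hd]⟩
    have hstep : ∀ i, p (i + 1) - p i = d := fun i => by simp only [p]; push_cast; ring
    calc dist (g s) (g t) = dist (g (p 0)) (g (p n)) := by simp [p, hnd]
      _ ≤ ∑ i ∈ range n, dist (g (p i)) (g (p (i + 1))) := dist_le_range_sum_dist (g ∘ p) n
      _ ≤ ∑ _i ∈ range n, K * d ^ γ := by
          refine sum_le_sum fun i hi => ?_
          have hi := mem_range.mp hi
          rw [dist_comm, dist_eq_norm, ← hstep i]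
          exact hg _ _ (hp i hi.le).1 (by linarith [hstep i]) (hp (i + 1) hi).2
      _ = K * (t - s) ^ γ * (n : ℝ) ^ (1 - γ) := by
          rw [sum_const, card_range, nsmul_eq_mul, Real.div_rpow (by linarith) hn'.le,
            Real.rpow_sub hn', Real.rpow_one]
          field_simp
  have hlim : Tendsto (fun n : ℕ => K * (t - s) ^ γ * (n : ℝ) ^ (1 - γ)) atTop (𝓝 0) := by
    have := ((tendsto_rpow_neg_atTop (by linarith : 0 < γ - 1)).comp
      tendsto_natCast_atTop_atTop).const_mul (K * (t - s) ^ γ)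
    simpa [Function.comp_def, neg_sub] using this
  exact dist_le_zero.mp (ge_of_tendsto hlim (eventually_gt_atTop 0 |>.mono hbound))

lemma sub_eq_sub_of_norm_sub_sub_le {E : Type*} [NormedAddCommGroup E] {μ : ℝ → ℝ → E}
    {φ ψ : ℝ → E} {T K L γ : ℝ} (hγ : 1 < γ)
    (hφ : ∀ s t, 0 ≤ s → s ≤ t → t ≤ T → ‖φ t - φ s - μ s t‖ ≤ K * (t - s) ^ γ)
    (hψ : ∀ s t, 0 ≤ s → s ≤ t → t ≤ T → ‖ψ t - ψ s - μ s t‖ ≤ L * (t - s) ^ γ)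
    {s t : ℝ} (hs : 0 ≤ s) (hst : s ≤ t) (htT : t ≤ T) : ψ t - ψ s = φ t - φ s := by
  have hdiff : (ψ - φ) s = (ψ - φ) t := by
    refine eq_of_norm_sub_le_mul_rpow (K := L + K) hγ hst fun x y hsx hxy hyt => ?_
    have hx : 0 ≤ x := hs.trans hsx
    have hyT : y ≤ T := hyt.trans htT
    calc ‖(ψ - φ) y - (ψ - φ) x‖ = ‖(ψ y - ψ x - μ x y) - (φ y - φ x - μ x y)‖ := by
          simp only [Pi.sub_apply]; congr 1; abel
      _ ≤ L * (y - x) ^ γ + K * (y - x) ^ γ :=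
          (norm_sub_le _ _).trans (add_le_add (hψ x y hx hxy hyT) (hφ x y hx hxy hyT))
      _ = (L + K) * (y - x) ^ γ := by ring
  simp only [Pi.sub_apply] at hdiff
  rw [sub_eq_sub_iff_sub_eq_sub, hdiff]

theorem additive_sewing_general {E : Type*} [NormedAddCommGroup E] [CompleteSpace E]
    (T : ℝ) (c γ : ℝ) (hc : 0 < c) (hγ : 1 < γ) :
    ∃ c' : ℝ, 0 < c' ∧
      ∀ μ : ℝ → ℝ → E,
        (∀ s u t : ℝ, 0 ≤ s → s ≤ u → u ≤ t → t ≤ T →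
          ‖(μ u t + μ s u) - μ s t‖ ≤ c * (t - s) ^ γ) →
        ∃ φ : ℝ → E,
          (∀ s t : ℝ, 0 ≤ s → s ≤ t → t ≤ T →
            ‖(φ t - φ s) - μ s t‖ ≤ c' * (t - s) ^ γ) ∧
          ∀ (ψ : ℝ → E) (c'' : ℝ), 0 < c'' →
            (∀ s t : ℝ, 0 ≤ s → s ≤ t → t ≤ T →
              ‖(ψ t - ψ s) - μ s t‖ ≤ c'' * (t - s) ^ γ) →
            ∀ s t : ℝ, 0 ≤ s → s ≤ t → t ≤ T → ψ t - ψ s = φ t - φ s := by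
  refine ⟨c * sewingConstant γ, mul_pos hc (sewingConstant_pos hγ), fun μ hμ => ?_⟩
  replace hμ : AlmostAdditive μ T c γ := hμ
  have hφ : ∀ s t, 0 ≤ s → s ≤ t → t ≤ T →
      ‖sewingMap μ T t - sewingMap μ T s - μ s t‖ ≤ c * sewingConstant γ * (t - s) ^ γ :=
    fun _ _ => hμ.norm_sewingMap_sub_sub_le hc.le hγ
  exact ⟨sewingMap μ T, hφ, fun ψ _ _ hψ _ _ => sub_eq_sub_of_norm_sub_sub_le hγ hφ hψ⟩

/-- **Additive sewing lemma (Feyel–de la Pradelle).**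
Let `E` be a Banach space, `T > 0`, and let `μ` be an `E`-valued function on the simplex
`{(s,t) : 0 ≤ s ≤ t ≤ T}` (written `μ s t` for `μ_{ts}`) which is almost-additive:
`‖(μ_{tu} + μ_{us}) − μ_{ts}‖ ≤ c |t−s|^γ` with `c > 0`, `γ > 1`. Then there is a function
`φ : [0,T] → E` and a constant `c' > 0` depending only on `c`, `γ` and `T` with
`‖(φ_t − φ_s) − μ_{ts}‖ ≤ c' |t−s|^γ`; moreover `φ` is unique up to an additive constant,
i.e. any other such `ψ` has the same increments as `φ`. -/
theorem additive_sewing {E : Type*} [NormedAddCommGroup E] [NormedSpace ℝ E] [CompleteSpace E]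
    (T : ℝ) (hT : 0 < T) (c γ : ℝ) (hc : 0 < c) (hγ : 1 < γ) :
    ∃ c' : ℝ, 0 < c' ∧
      ∀ μ : ℝ → ℝ → E,
        (∀ s u t : ℝ, 0 ≤ s → s ≤ u → u ≤ t → t ≤ T →
          ‖(μ u t + μ s u) - μ s t‖ ≤ c * (t - s) ^ γ) →
        ∃ φ : ℝ → E,
          (∀ s t : ℝ, 0 ≤ s → s ≤ t → t ≤ T →
            ‖(φ t - φ s) - μ s t‖ ≤ c' * (t - s) ^ γ) ∧
          ∀ (ψ : ℝ → E) (c'' : ℝ), 0 < c'' →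
            (∀ s t : ℝ, 0 ≤ s → s ≤ t → t ≤ T →
              ‖(ψ t - ψ s) - μ s t‖ ≤ c'' * (t - s) ^ γ) →
            ∀ s t : ℝ, 0 ≤ s → s ≤ t → t ≤ T → ψ t - ψ s = φ t - φ s :=
  additive_sewing_general T c γ hc hγ
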